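/- arXiv:2310.17153 — 2 statements merged into one kernel-verified Lean document; each statement's English description precedes it below -/
import Mathlib

section
/- Let α ∈ (0,1), let μ be a probability measure on ℝ^d, and let q(x|m) = (2π(1−α))^{−d/2} exp(−‖x − √α m‖²/(2(1−α))) be the Gaussian conditional density of x given m. Define the marginal density p(x) = ∫ q(x|m) dμ(m) and the noise ε(x,m) := (x − √α m)/√(1−α). Then p is differentiable at every x and √(1−α) · ∇p(x) = − ∫ ε(x,m) · q(x|m) dμ(m). In particular, at every x with p(x) > 0, the conditional expectation of the noise ε given x equals −√(1−α) · ∇ log p(x). -/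
open MeasureTheory

section Aux

variable {E : Type*} [NormedAddCommGroup E] [InnerProductSpace ℝ E] [CompleteSpace E]

lemma gauss_grad_aux (C σ2 : ℝ) (hσ2 : 0 < σ2) (c x : E) :
    HasGradientAt (fun y => C * Real.exp (-‖y - c‖ ^ 2 / (2 * σ2)))
      ((-(σ2)⁻¹ * (C * Real.exp (-‖x - c‖ ^ 2 / (2 * σ2)))) • (x - c)) x := by
  have hfeq : (fun y : E => C * Real.exp (-‖y - c‖ ^ 2 / (2 * σ2)))
      = fun y : E => C * Real.exp (-‖y - c‖ ^ 2 * (2 * σ2)⁻¹) := by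
    funext y; rw [div_eq_mul_inv]
  have h1 : HasFDerivAt (fun y : E => y - c) (ContinuousLinearMap.id ℝ E) x :=
    (hasFDerivAt_id x).sub_const c
  have h2 := h1.norm_sq
  have h3 := ((h2.neg).mul_const ((2 * σ2)⁻¹)).exp.const_mul C
  rw [hasGradientAt_iff_hasFDerivAt, hfeq]
  refine h3.congr_fderiv ?_
  ext y
  simp only [InnerProductSpace.toDual_apply_apply, real_inner_smul_left,
    ContinuousLinearMap.coe_smul', Pi.smul_apply, ContinuousLinearMap.coe_comp',
    Function.comp_apply, ContinuousLinearMap.coe_id', id_eq, smul_eq_mul,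
    ContinuousLinearMap.neg_apply, innerSL_apply_apply, Pi.neg_apply]
  rw [div_eq_mul_inv]
  field_simp
  ring

lemma gauss_bound_aux (σ2 : ℝ) (hσ2 : 0 < σ2) (t : ℝ) (ht : 0 ≤ t) :
    t * Real.exp (-t ^ 2 / (2 * σ2)) ≤ Real.sqrt (2 * σ2) := by
  have h2σ : (0 : ℝ) < 2 * σ2 := by linarith
  have hs : 0 < Real.sqrt (2 * σ2) := Real.sqrt_pos.2 h2σ
  rcases le_or_gt t (Real.sqrt (2 * σ2)) with h | h
  · calc t * Real.exp (-t ^ 2 / (2 * σ2)) ≤ t * 1 := by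
          apply mul_le_mul_of_nonneg_left _ ht
          rw [Real.exp_le_one_iff]
          exact div_nonpos_of_nonpos_of_nonneg (neg_nonpos.2 (by positivity)) h2σ.le
    _ = t := mul_one t
    _ ≤ _ := h
  · have ht0 : 0 < t := lt_trans hs h
    have hu : 0 < t ^ 2 / (2 * σ2) := by positivity
    have h1 : t ^ 2 / (2 * σ2) ≤ Real.exp (t ^ 2 / (2 * σ2)) := by
      linarith [Real.add_one_le_exp (t ^ 2 / (2 * σ2))]
    have hexp : Real.exp (-t ^ 2 / (2 * σ2)) ≤ (2 * σ2) / t ^ 2 := by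
      rw [neg_div, Real.exp_neg]
      calc (Real.exp (t ^ 2 / (2 * σ2)))⁻¹ ≤ (t ^ 2 / (2 * σ2))⁻¹ :=
            inv_anti₀ hu h1
        _ = (2 * σ2) / t ^ 2 := inv_div _ _
    calc t * Real.exp (-t ^ 2 / (2 * σ2)) ≤ t * ((2 * σ2) / t ^ 2) :=
          mul_le_mul_of_nonneg_left hexp ht
      _ = (2 * σ2) / t := by field_simp
      _ ≤ (2 * σ2) / Real.sqrt (2 * σ2) :=
          div_le_div_of_nonneg_left h2σ.le hs h.le
      _ = Real.sqrt (2 * σ2) := Real.div_sqrt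

end Aux

set_option maxHeartbeats 1000000 in
/-- Score/ε-prediction relation of diffusion models: with the VP Gaussian conditional density
`q(x|m) = (2π(1−α))^{−d/2} exp(−‖x−√α m‖²/(2(1−α)))`, marginal `p(x) = ∫ q(x|m) dμ(m)` and
noise `ε(x,m) = (x − √α m)/√(1−α)`, the density `p` is differentiable with
`√(1−α)·∇p(x) = −∫ ε(x,m) q(x|m) dμ(m)`; in particular, where `p(x) > 0`, the conditional
expectation of `ε` given `x` equals `−√(1−α)·∇ log p(x)`. -/
theorem epsilon_prediction_score_relation
    (d : ℕ) (hd : 1 ≤ d) (α : ℝ) (hα : α ∈ Set.Ioo (0 : ℝ) 1)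
    (μ : Measure (EuclideanSpace ℝ (Fin d))) [IsProbabilityMeasure μ]
    (q : EuclideanSpace ℝ (Fin d) → EuclideanSpace ℝ (Fin d) → ℝ)
    (hq : ∀ x m, q x m = (2 * Real.pi * (1 - α)) ^ (-(d : ℝ) / 2) *
      Real.exp (-‖x - Real.sqrt α • m‖ ^ 2 / (2 * (1 - α))))
    (p : EuclideanSpace ℝ (Fin d) → ℝ)
    (hp : ∀ x, p x = ∫ m, q x m ∂μ)
    (ε : EuclideanSpace ℝ (Fin d) → EuclideanSpace ℝ (Fin d) → EuclideanSpace ℝ (Fin d))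
    (hε : ∀ x m, ε x m = (Real.sqrt (1 - α))⁻¹ • (x - Real.sqrt α • m)) :
    ∀ x, ∃ G : EuclideanSpace ℝ (Fin d), HasGradientAt p G x ∧
      Real.sqrt (1 - α) • G = -∫ m, q x m • ε x m ∂μ ∧
      (0 < p x → ∃ L : EuclideanSpace ℝ (Fin d),
        HasGradientAt (fun y => Real.log (p y)) L x ∧
        (p x)⁻¹ • (∫ m, q x m • ε x m ∂μ) = -(Real.sqrt (1 - α) • L)) := by
  classical
  obtain ⟨hα0, hα1⟩ := hα
  have hσ2 : 0 < 1 - α := by linarith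
  set σ : ℝ := Real.sqrt (1 - α) with hσdef
  have hσ : 0 < σ := Real.sqrt_pos.2 hσ2
  have hσsq : σ * σ = 1 - α := Real.mul_self_sqrt hσ2.le
  set C : ℝ := (2 * Real.pi * (1 - α)) ^ (-(d : ℝ) / 2) with hCdef
  have hC : 0 < C := Real.rpow_pos_of_pos (by positivity) _
  have hqpos : ∀ x m, 0 < q x m := by
    intro x m; rw [hq]; positivity
  -- the pointwise gradient
  set g : EuclideanSpace ℝ (Fin d) → EuclideanSpace ℝ (Fin d) → EuclideanSpace ℝ (Fin d) :=
    fun x m => (-(1 - α)⁻¹ * q x m) • (x - Real.sqrt α • m) with hgdef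
  have hgrad : ∀ x m, HasGradientAt (fun y => q y m) (g x m) x := by
    intro x m
    have hfun : (fun y => q y m)
        = fun y => C * Real.exp (-‖y - Real.sqrt α • m‖ ^ 2 / (2 * (1 - α))) :=
      funext fun y => hq y m
    rw [hfun, hgdef]
    simp only [hq x m]
    exact gauss_grad_aux C (1 - α) hσ2 (Real.sqrt α • m) x
  -- continuity in m
  have hqcont : ∀ x, Continuous fun m => q x m := by
    intro x
    have hfun : (fun m => q x m)
        = fun m => C * Real.exp (-‖x - Real.sqrt α • m‖ ^ 2 / (2 * (1 - α))) :=
      funext fun m => hq x m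
    rw [hfun]; fun_prop
  have hgcont : ∀ x, Continuous fun m => g x m := by
    intro x
    simp only [hgdef]
    exact ((continuous_const.mul (hqcont x)).smul
      (continuous_const.sub (continuous_id.const_smul (Real.sqrt α))))
  -- norm bound on g
  set B : ℝ := (1 - α)⁻¹ * (C * Real.sqrt (2 * (1 - α))) with hBdef
  have hgbound : ∀ x m, ‖g x m‖ ≤ B := by
    intro x m
    have hq' := hqpos x m
    rw [hgdef]
    simp only []
    rw [norm_smul, Real.norm_eq_abs, abs_mul, abs_neg, abs_of_pos (inv_pos.2 hσ2),
      abs_of_pos hq', hBdef, mul_assoc, mul_le_mul_iff_right₀ (inv_pos.2 hσ2), hq x m]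
    calc C * Real.exp (-‖x - Real.sqrt α • m‖ ^ 2 / (2 * (1 - α))) * ‖x - Real.sqrt α • m‖
        = C * (‖x - Real.sqrt α • m‖ *
            Real.exp (-‖x - Real.sqrt α • m‖ ^ 2 / (2 * (1 - α)))) := by ring
      _ ≤ C * Real.sqrt (2 * (1 - α)) := by
          apply mul_le_mul_of_nonneg_left _ hC.le
          exact gauss_bound_aux (1 - α) hσ2 _ (norm_nonneg _)
  intro x₀
  -- differentiation under the integral sign
  have key : HasFDerivAt (fun x => ∫ m, q x m ∂μ)
      (∫ m, (InnerProductSpace.toDual ℝ (EuclideanSpace ℝ (Fin d))) (g x₀ m) ∂μ) x₀ := by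
    apply hasFDerivAt_integral_of_dominated_of_fderiv_le (s := Metric.ball x₀ 1) (bound := fun _ => B)
      (F' := fun x m => (InnerProductSpace.toDual ℝ (EuclideanSpace ℝ (Fin d))) (g x m)) (Metric.ball_mem_nhds x₀ one_pos)
    · exact Filter.Eventually.of_forall fun x => (hqcont x).aestronglyMeasurable
    · refine Integrable.mono' (integrable_const C) (hqcont x₀).aestronglyMeasurable
        (Filter.Eventually.of_forall fun m => ?_)
      rw [Real.norm_eq_abs, abs_of_pos (hqpos x₀ m), hq x₀ m]
      have hexp1 : Real.exp (-‖x₀ - Real.sqrt α • m‖ ^ 2 / (2 * (1 - α))) ≤ 1 := by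
        rw [Real.exp_le_one_iff]
        exact div_nonpos_of_nonpos_of_nonneg (neg_nonpos.2 (by positivity)) (by positivity)
      nlinarith [Real.exp_pos (-‖x₀ - Real.sqrt α • m‖ ^ 2 / (2 * (1 - α)))]
    · exact ((InnerProductSpace.toDual ℝ (EuclideanSpace ℝ (Fin d))).continuous.comp
        (hgcont x₀)).aestronglyMeasurable
    · refine Filter.Eventually.of_forall fun m x _ => ?_
      rw [LinearIsometryEquiv.norm_map]
      exact hgbound x m
    · exact integrable_const B
    · exact Filter.Eventually.of_forall fun m x _ => (hgrad x m).hasFDerivAt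
  have hint : (∫ m, (InnerProductSpace.toDual ℝ (EuclideanSpace ℝ (Fin d))) (g x₀ m) ∂μ)
      = (InnerProductSpace.toDual ℝ (EuclideanSpace ℝ (Fin d))) (∫ m, g x₀ m ∂μ) :=
    (InnerProductSpace.toDual ℝ (EuclideanSpace ℝ (Fin d))).toLinearIsometry.integral_comp_comm _
  set G : EuclideanSpace ℝ (Fin d) := ∫ m, g x₀ m ∂μ with hGdef
  have hpfun : p = fun x => ∫ m, q x m ∂μ := funext hp
  have hpG : HasGradientAt p G x₀ := by
    rw [hasGradientAt_iff_hasFDerivAt, hpfun, ← hint]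
    exact key
  -- the integral identity
  have hkey2 : σ • G = -∫ m, q x₀ m • ε x₀ m ∂μ := by
    have hpt : ∀ m, σ • g x₀ m = -(q x₀ m • ε x₀ m) := by
      intro m
      show σ • ((-(1 - α)⁻¹ * q x₀ m) • (x₀ - Real.sqrt α • m)) = -(q x₀ m • ε x₀ m)
      rw [hε, smul_smul, smul_smul, ← neg_smul]
      congr 1
      have hσne : σ ≠ 0 := hσ.ne'
      field_simp
      nlinarith [hσsq, hqpos x₀ m]
    calc σ • G = ∫ m, σ • g x₀ m ∂μ := (integral_smul σ _).symm
      _ = ∫ m, -(q x₀ m • ε x₀ m) ∂μ :=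
          integral_congr_ae (Filter.Eventually.of_forall hpt)
      _ = -∫ m, q x₀ m • ε x₀ m ∂μ := integral_neg _
  refine ⟨G, hpG, hkey2, ?_⟩
  intro hpx
  refine ⟨(p x₀)⁻¹ • G, ?_, ?_⟩
  · rw [hasGradientAt_iff_hasFDerivAt, _root_.map_smul]
    exact (Real.hasDerivAt_log hpx.ne').comp_hasFDerivAt x₀ hpG.hasFDerivAt
  · rw [smul_comm, hkey2, smul_neg, neg_neg]
end

section
/- Let ν be a probability measure on a measurable space Z. For each z ∈ Z, let q(·|z) : ℝ^d → (0,∞) be a probability density, differentiable in x, and let q̃(x) = ∫ q(x|z) dν(z). Assume that 0 < q̃(x) < ∞ and that ∇q̃(x) = ∫ ∇_x q(x|z) dν(z) for every x (differentiation under the integral). Let π be the joint probability measure on Z × ℝ^d given by dπ(z,x) = q(x|z) dx dν(z). Let S : ℝ^d → ℝ^d be measurable with (z,x) ↦ ‖S(x)‖², (z,x) ↦ ‖∇_x log q(x|z)‖² π-integrable and x ↦ ‖∇ log q̃(x)‖² q̃(x) Lebesgue-integrable. Then ∫ ⟨S(x) − ∇ log q̃(x), S(x) + ∇ log q̃(x)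 − 2 ∇_x log q(x|z)⟩ dπ(z,x) = ∫ ‖S(x) − ∇ log q̃(x)‖² q̃(x) dx. -/
open MeasureTheory
open scoped RealInnerProductSpace

set_option maxHeartbeats 1000000

/-- Joint-training identity of HSIVI-SM (Appendix C.3): after plugging in the optimal
auxiliary function `g* = ∇ log q̃`, each term of the objective satisfies
`∫ ⟨S(x) − ∇ log q̃(x), S(x) + ∇ log q̃(x) − 2∇ₓ log q(x|z)⟩ dπ(z,x)
  = ∫ ‖S(x) − ∇ log q̃(x)‖² q̃(x) dx`, where `dπ(z,x) = q(x|z) dx dν(z)`,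
`∇ₓ log q(x|z) = (q(x|z))⁻¹ • ∇ₓ q(x|z)` and `∇ log q̃(x) = (q̃(x))⁻¹ • ∫ ∇ₓ q(x|z) dν(z)`. -/
theorem hsivi_joint_training_fisher_identity
    {Z : Type*} [MeasurableSpace Z] (ν : Measure Z) [IsProbabilityMeasure ν]
    (d : ℕ) (hd : 1 ≤ d)
    (q : Z → EuclideanSpace ℝ (Fin d) → ℝ)
    (hq_pos : ∀ z x, 0 < q z x)
    (hq_meas : Measurable fun p : Z × EuclideanSpace ℝ (Fin d) => q p.1 p.2)
    (hq_dens : ∀ z, (∫ x : EuclideanSpace ℝ (Fin d), q z x) = 1)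
    (gq : Z → EuclideanSpace ℝ (Fin d) → EuclideanSpace ℝ (Fin d))
    (hgq_meas : Measurable fun p : Z × EuclideanSpace ℝ (Fin d) => gq p.1 p.2)
    (hgq : ∀ z x, HasGradientAt (q z) (gq z x) x)
    (qt : EuclideanSpace ℝ (Fin d) → ℝ)
    (hqt : ∀ x, qt x = ∫ z, q z x ∂ν)
    (hqt_pos : ∀ x, 0 < qt x)
    (hq_int : ∀ x, Integrable (fun z => q z x) ν)
    (hgq_int : ∀ x, Integrable (fun z => gq z x) ν)
    (hqt_grad : ∀ x, HasGradientAt qt (∫ z, gq z x ∂ν) x)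
    (π : Measure (Z × EuclideanSpace ℝ (Fin d)))
    (hπ : π = (ν.prod volume).withDensity fun p => ENNReal.ofReal (q p.1 p.2))
    (S : EuclideanSpace ℝ (Fin d) → EuclideanSpace ℝ (Fin d))
    (hS_meas : Measurable S)
    (hS_int : Integrable (fun p : Z × EuclideanSpace ℝ (Fin d) => ‖S p.2‖ ^ 2) π)
    (hs_int : Integrable
      (fun p : Z × EuclideanSpace ℝ (Fin d) => ‖(q p.1 p.2)⁻¹ • gq p.1 p.2‖ ^ 2) π)
    (hst_int : Integrable
      (fun x : EuclideanSpace ℝ (Fin d) => ‖(qt x)⁻¹ • ∫ z, gq z x ∂ν‖ ^ 2 * qt x) volume) :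
    (∫ p, ⟪S p.2 - (qt p.2)⁻¹ • ∫ z, gq z p.2 ∂ν,
        S p.2 + ((qt p.2)⁻¹ • ∫ z, gq z p.2 ∂ν)
          - (2 : ℝ) • ((q p.1 p.2)⁻¹ • gq p.1 p.2)⟫ ∂π)
      = ∫ x, ‖S x - (qt x)⁻¹ • ∫ z, gq z x ∂ν‖ ^ 2 * qt x := by
  have hq0 : ∀ z x, 0 ≤ q z x := fun z x => (hq_pos z x).le
  set sg : EuclideanSpace ℝ (Fin d) → EuclideanSpace ℝ (Fin d) :=
    fun x => (qt x)⁻¹ • ∫ z, gq z x ∂ν with hsg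
  set s : Z × EuclideanSpace ℝ (Fin d) → EuclideanSpace ℝ (Fin d) :=
    fun p => (q p.1 p.2)⁻¹ • gq p.1 p.2 with hs
  change (∫ p, ⟪S p.2 - sg p.2, S p.2 + sg p.2 - (2 : ℝ) • s p⟫ ∂π)
      = ∫ x, ‖S x - sg x‖ ^ 2 * qt x
  -- basic measurability
  have hqt_cont : Continuous qt :=
    continuous_iff_continuousAt.2 fun x => (hqt_grad x).hasFDerivAt.continuousAt
  have hqt_meas : Measurable qt := hqt_cont.measurable
  have hG_meas : Measurable fun x : EuclideanSpace ℝ (Fin d) => ∫ z, gq z x ∂ν :=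
    (hgq_meas.stronglyMeasurable.integral_prod_left).measurable
  have hsg_meas : Measurable sg := hqt_meas.inv.smul hG_meas
  have hs_meas : Measurable s := (hq_meas.inv).smul hgq_meas
  have hinner_meas : Measurable fun p : Z × EuclideanSpace ℝ (Fin d) =>
      ⟪S p.2 - sg p.2, S p.2 + sg p.2 - (2 : ℝ) • s p⟫ := by
    refine Measurable.inner ?_ ?_
    · exact ((hS_meas.comp measurable_snd).sub (hsg_meas.comp measurable_snd))
    · exact ((hS_meas.comp measurable_snd).add (hsg_meas.comp measurable_snd)).sub
        (hs_meas.const_smul (2 : ℝ))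
  -- converting integrals/integrability w.r.t. π into the product measure
  have hdens_meas : Measurable fun p : Z × EuclideanSpace ℝ (Fin d) =>
      ENNReal.ofReal (q p.1 p.2) := hq_meas.ennreal_ofReal
  have hdens_lt : ∀ᵐ p ∂(ν.prod volume),
      ENNReal.ofReal (q p.1 p.2) < ⊤ :=
    Filter.Eventually.of_forall fun p => ENNReal.ofReal_lt_top
  have hπ_int : ∀ k : Z × EuclideanSpace ℝ (Fin d) → ℝ,
      Integrable k π → Integrable (fun p => k p * q p.1 p.2) (ν.prod volume) := by
    intro k hk
    rw [hπ, integrable_withDensity_iff hdens_meas hdens_lt] at hk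
    refine hk.congr (Filter.Eventually.of_forall fun p => ?_)
    show k p * (ENNReal.ofReal (q p.1 p.2)).toReal = k p * q p.1 p.2
    rw [ENNReal.toReal_ofReal (hq0 _ _)]
  have hS2 : Integrable (fun p : Z × EuclideanSpace ℝ (Fin d) =>
      ‖S p.2‖ ^ 2 * q p.1 p.2) (ν.prod volume) := hπ_int _ hS_int
  have hs2 : Integrable (fun p : Z × EuclideanSpace ℝ (Fin d) =>
      ‖s p‖ ^ 2 * q p.1 p.2) (ν.prod volume) := hπ_int _ hs_int
  -- integrability of the `sg` term on the product measure, via Tonelli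
  have hsg2 : Integrable (fun p : Z × EuclideanSpace ℝ (Fin d) =>
      ‖sg p.2‖ ^ 2 * q p.1 p.2) (ν.prod volume) := by
    constructor
    · exact (((hsg_meas.comp measurable_snd).norm.pow measurable_const).mul
        hq_meas).aestronglyMeasurable
    · rw [hasFiniteIntegral_iff_ofReal (Filter.Eventually.of_forall fun p =>
        mul_nonneg (sq_nonneg _) (hq0 _ _))]
      have hmeas : Measurable fun p : Z × EuclideanSpace ℝ (Fin d) =>
          ENNReal.ofReal (‖sg p.2‖ ^ 2 * q p.1 p.2) :=
        (((hsg_meas.comp measurable_snd).norm.pow measurable_const).mul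
          hq_meas).ennreal_ofReal
      rw [lintegral_prod_symm' _ hmeas]
      have hx : ∀ x : EuclideanSpace ℝ (Fin d),
          (∫⁻ z, ENNReal.ofReal (‖sg x‖ ^ 2 * q z x) ∂ν)
            = ENNReal.ofReal (‖sg x‖ ^ 2 * qt x) := by
        intro x
        have hqx_meas : Measurable fun z => ENNReal.ofReal (q z x) :=
          (hq_meas.comp (measurable_id.prodMk measurable_const)).ennreal_ofReal
        calc (∫⁻ z, ENNReal.ofReal (‖sg x‖ ^ 2 * q z x) ∂ν)
            = ∫⁻ z, ENNReal.ofReal (‖sg x‖ ^ 2) * ENNReal.ofReal (q z x) ∂ν := by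
              simp_rw [ENNReal.ofReal_mul (sq_nonneg _)]
          _ = ENNReal.ofReal (‖sg x‖ ^ 2) * ∫⁻ z, ENNReal.ofReal (q z x) ∂ν :=
              lintegral_const_mul _ hqx_meas
          _ = ENNReal.ofReal (‖sg x‖ ^ 2) * ENNReal.ofReal (qt x) := by
              rw [← ofReal_integral_eq_lintegral_ofReal (hq_int x)
                (Filter.Eventually.of_forall fun z => hq0 z x), ← hqt x]
          _ = ENNReal.ofReal (‖sg x‖ ^ 2 * qt x) := by
              rw [ENNReal.ofReal_mul (sq_nonneg _)]
      simp_rw [hx]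
      have := hst_int.hasFiniteIntegral
      rwa [hasFiniteIntegral_iff_ofReal (Filter.Eventually.of_forall fun x =>
        mul_nonneg (sq_nonneg _) (hqt_pos x).le)] at this
  -- the full integrand on the product measure, and its integrability by domination
  have hG_int : Integrable (fun p : Z × EuclideanSpace ℝ (Fin d) =>
      (4 * (‖S p.2‖ ^ 2 * q p.1 p.2) + 4 * (‖sg p.2‖ ^ 2 * q p.1 p.2))
        + 4 * (‖s p‖ ^ 2 * q p.1 p.2)) (ν.prod volume) :=
    ((hS2.const_mul 4).add (hsg2.const_mul 4)).add (hs2.const_mul 4)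
  have hF_int : Integrable (fun p : Z × EuclideanSpace ℝ (Fin d) =>
      ⟪S p.2 - sg p.2, S p.2 + sg p.2 - (2 : ℝ) • s p⟫ * q p.1 p.2)
      (ν.prod volume) := by
    refine hG_int.mono' ((hinner_meas.mul hq_meas).aestronglyMeasurable)
      (Filter.Eventually.of_forall fun p => ?_)
    have hab := abs_real_inner_le_norm (S p.2 - sg p.2)
      (S p.2 + sg p.2 - (2 : ℝ) • s p)
    have h1 : ‖S p.2 - sg p.2‖ ≤ ‖S p.2‖ + ‖sg p.2‖ := norm_sub_le _ _
    have h2 : ‖S p.2 + sg p.2 - (2 : ℝ) • s p‖ ≤ ‖S p.2‖ + ‖sg p.2‖ + 2 * ‖s p‖ := by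
      refine (norm_sub_le _ _).trans ?_
      have := norm_add_le (S p.2) (sg p.2)
      have h2s : ‖(2 : ℝ) • s p‖ = 2 * ‖s p‖ := by
        rw [norm_smul]; simp
      rw [h2s]; linarith
    have hn1 : (0 : ℝ) ≤ ‖S p.2‖ := norm_nonneg _
    have hn2 : (0 : ℝ) ≤ ‖sg p.2‖ := norm_nonneg _
    have hn3 : (0 : ℝ) ≤ ‖s p‖ := norm_nonneg _
    have hn4 : (0 : ℝ) ≤ ‖S p.2 - sg p.2‖ := norm_nonneg _
    have hn5 : (0 : ℝ) ≤ ‖S p.2 + sg p.2 - (2 : ℝ) • s p‖ := norm_nonneg _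
    have hbound : |⟪S p.2 - sg p.2, S p.2 + sg p.2 - (2 : ℝ) • s p⟫|
        ≤ 4 * ‖S p.2‖ ^ 2 + 4 * ‖sg p.2‖ ^ 2 + 4 * ‖s p‖ ^ 2 := by
      nlinarith [sq_nonneg (‖S p.2‖ + ‖sg p.2‖ - 2 * ‖s p‖),
        sq_nonneg (‖S p.2‖ - ‖sg p.2‖), sq_nonneg (‖S p.2‖ + ‖sg p.2‖)]
    have : ‖⟪S p.2 - sg p.2, S p.2 + sg p.2 - (2 : ℝ) • s p⟫ * q p.1 p.2‖
        = |⟪S p.2 - sg p.2, S p.2 + sg p.2 - (2 : ℝ) • s p⟫| * q p.1 p.2 := by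
      rw [Real.norm_eq_abs, abs_mul, abs_of_nonneg (hq0 _ _)]
    rw [this]
    calc |⟪S p.2 - sg p.2, S p.2 + sg p.2 - (2 : ℝ) • s p⟫| * q p.1 p.2
        ≤ (4 * ‖S p.2‖ ^ 2 + 4 * ‖sg p.2‖ ^ 2 + 4 * ‖s p‖ ^ 2) * q p.1 p.2 :=
          mul_le_mul_of_nonneg_right hbound (hq0 _ _)
      _ = (4 * (‖S p.2‖ ^ 2 * q p.1 p.2) + 4 * (‖sg p.2‖ ^ 2 * q p.1 p.2))
            + 4 * (‖s p‖ ^ 2 * q p.1 p.2) := by ring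
  -- step 1 : rewrite the `π`-integral as a weighted integral on the product measure
  have step1 : (∫ p, ⟪S p.2 - sg p.2, S p.2 + sg p.2 - (2 : ℝ) • s p⟫ ∂π)
      = ∫ p, ⟪S p.2 - sg p.2, S p.2 + sg p.2 - (2 : ℝ) • s p⟫ * q p.1 p.2
          ∂(ν.prod volume) := by
    rw [hπ]
    have : (fun p : Z × EuclideanSpace ℝ (Fin d) => ENNReal.ofReal (q p.1 p.2))
        = fun p : Z × EuclideanSpace ℝ (Fin d) => ((q p.1 p.2).toNNReal : ENNReal) := rfl
    rw [this, integral_withDensity_eq_integral_smul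
      hq_meas.real_toNNReal]
    refine integral_congr_ae (Filter.Eventually.of_forall fun p => ?_)
    show (q p.1 p.2).toNNReal • ⟪S p.2 - sg p.2, S p.2 + sg p.2 - (2 : ℝ) • s p⟫
        = ⟪S p.2 - sg p.2, S p.2 + sg p.2 - (2 : ℝ) • s p⟫ * q p.1 p.2
    rw [NNReal.smul_def, smul_eq_mul, Real.coe_toNNReal _ (hq0 _ _), mul_comm]
  -- step 2 : Fubini
  have step2 : (∫ p, ⟪S p.2 - sg p.2, S p.2 + sg p.2 - (2 : ℝ) • s p⟫ * q p.1 p.2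
        ∂(ν.prod volume))
      = ∫ x, ∫ z, ⟪S x - sg x, S x + sg x - (2 : ℝ) • s (z, x)⟫ * q z x ∂ν := by
    exact integral_prod_symm _ hF_int
  -- step 3 : for each `x`, compute the inner integral over `z`
  have step3 : ∀ x : EuclideanSpace ℝ (Fin d),
      (∫ z, ⟪S x - sg x, S x + sg x - (2 : ℝ) • s (z, x)⟫ * q z x ∂ν)
        = ‖S x - sg x‖ ^ 2 * qt x := by
    intro x
    have hGx : (∫ z, gq z x ∂ν) = qt x • sg x := by
      rw [hsg, smul_smul, mul_inv_cancel₀ (hqt_pos x).ne', one_smul]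
    have e1 : ∀ z, ⟪S x - sg x, S x + sg x - (2 : ℝ) • s (z, x)⟫ * q z x
        = ⟪S x - sg x, S x + sg x⟫ * q z x - 2 * ⟪S x - sg x, gq z x⟫ := by
      intro z
      have hz : q z x ≠ 0 := (hq_pos z x).ne'
      simp only [hs]
      simp only [inner_sub_right, inner_add_right, real_inner_smul_right]
      field_simp
    calc (∫ z, ⟪S x - sg x, S x + sg x - (2 : ℝ) • s (z, x)⟫ * q z x ∂ν)
        = ∫ z, (⟪S x - sg x, S x + sg x⟫ * q z x - 2 * ⟪S x - sg x, gq z x⟫) ∂ν :=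
          integral_congr_ae (Filter.Eventually.of_forall e1)
      _ = ⟪S x - sg x, S x + sg x⟫ * (∫ z, q z x ∂ν)
            - 2 * ∫ z, ⟪S x - sg x, gq z x⟫ ∂ν := by
          have h2int : Integrable (fun z => ⟪S x - sg x, gq z x⟫) ν := by
            have := ContinuousLinearMap.integrable_comp (innerSL ℝ (S x - sg x))
              (hgq_int x)
            simpa only [innerSL_apply_apply] using this
          rw [integral_sub ((hq_int x).const_mul _) (h2int.const_mul 2),
            integral_const_mul, integral_const_mul]
      _ = ⟪S x - sg x, S x + sg x⟫ * qt x - 2 * ⟪S x - sg x, ∫ z, gq z x ∂ν⟫ := by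
          rw [← hqt x, integral_inner (hgq_int x)]
      _ = ‖S x - sg x‖ ^ 2 * qt x := by
          rw [hGx, real_inner_smul_right]
          have hc : ⟪S x - sg x, S x⟫ - ⟪S x - sg x, sg x⟫ = ‖S x - sg x‖ ^ 2 := by
            rw [← inner_sub_right, real_inner_self_eq_norm_sq]
          rw [inner_add_right]
          linear_combination qt x * hc
  rw [step1, step2]
  exact integral_congr_ae (Filter.Eventually.of_forall step3)
end
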